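/- arXiv:2407.06390 — 5 statements merged into one kernel-verified Lean document; each statement's English description precedes it below -/
import Mathlib

section
/- Let (Ω, P) be a probability space, Π a finite index set of size d with a distinguished element π₀, and for each π ∈ Π let A_π (the approximate non-conformity score) and A°_π (the oracle non-conformity score) be real-valued random variables. Let F(x) = P(A°_{π₀} < x), let F̃(x) = (1/d)·#{π ∈ Π : A°_π < x} and F̂(x) = (1/d)·#{π ∈ Π : A_π < x} be the (random) empirical CDFs of the oracle and approximate scores, and define the randomized conformal p-value p̂ = (1/d)·#{π ∈ Π : A_π ≥ A_{π₀}}. Let δ₁, δ₂, γ₁, γ₂ ≥ 0 and D ≥ 0 and assume: (1) [approximate ergodicity] with probability at least 1 − γ₁, sup_{x ∈ ℝ} |F̃(x) − F(x)| ≤ δ₁; (2) [small estimation errors] with probability at least 1 − γ₂, both (1/d)·Σ_{π ∈ Π} (A_π − A°_π)² ≤ δ₂² and |A_{π₀} − A°_{π₀}| ≤ δ₂; and (3) the law of A°_{π₀} has a density with respect to Lebesgue measure bounded above by the constant D. Then for every ε ∈ (0, 1), |P(p̂ ≤ ε) − ε| ≤ 6δ₁ + 4δ₂ + 2D(δ₂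 + 2√δ₂) + γ₁ + γ₂. -/
open MeasureTheory Finset


/-- Finite Chebyshev bound. -/
lemma cheb_card {ι : Type*} [Fintype ι] (g : ι → ℝ) (δ : ℝ) (hδ : 0 ≤ δ)
    (h : ∑ π, g π ^ 2 ≤ (Fintype.card ι : ℝ) * δ ^ 2) :
    ((univ.filter fun π => Real.sqrt δ < |g π|).card : ℝ) ≤ (Fintype.card ι : ℝ) * δ := by
  set S := univ.filter fun π => Real.sqrt δ < |g π| with hS
  have hkey : ∀ π ∈ S, δ ≤ g π ^ 2 := by
    intro π hπ
    have h1 : Real.sqrt δ < |g π| := (mem_filter.mp hπ).2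
    have h2 : Real.sqrt δ ^ 2 ≤ |g π| ^ 2 :=
      pow_le_pow_left₀ (Real.sqrt_nonneg δ) h1.le 2
    rwa [Real.sq_sqrt hδ, sq_abs] at h2
  have hsum1 : δ * S.card ≤ ∑ π ∈ S, g π ^ 2 := by
    calc δ * S.card = ∑ _π ∈ S, δ := by rw [Finset.sum_const, nsmul_eq_mul, mul_comm]
    _ ≤ ∑ π ∈ S, g π ^ 2 := Finset.sum_le_sum hkey
  have hsum2 : ∑ π ∈ S, g π ^ 2 ≤ ∑ π, g π ^ 2 :=
    Finset.sum_le_sum_of_subset_of_nonneg (Finset.subset_univ S) (fun i _ _ => sq_nonneg _)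
  rcases eq_or_lt_of_le hδ with hδ0 | hδ0
  · have hSempty : S = ∅ := by
      rw [Finset.eq_empty_iff_forall_notMem]
      intro π hπ
      have h1 : δ ≤ g π ^ 2 := hkey π hπ
      have h2 : Real.sqrt δ < |g π| := (mem_filter.mp hπ).2
      rw [← hδ0, Real.sqrt_zero] at h2
      have h4 : (0:ℝ) < g π ^ 2 := by
        have := pow_pos h2 2; rwa [sq_abs] at this
      have h3 : g π ^ 2 ≤ ∑ π, g π ^ 2 :=
        Finset.single_le_sum (fun i _ => sq_nonneg (g i)) (mem_univ π)
      have h5 : ∑ π, g π ^ 2 ≤ 0 := by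
        have := h; rw [← hδ0] at this; simpa using this
      linarith
    rw [hSempty]
    simp only [Finset.card_empty, Nat.cast_zero]
    exact mul_nonneg (Nat.cast_nonneg _) hδ
  · have := hsum1.trans (hsum2.trans h)
    have h2 : δ * (S.card : ℝ) ≤ δ * ((Fintype.card ι : ℝ) * δ) := by nlinarith
    exact le_of_mul_le_mul_left h2 hδ0

/-- counting function is measurable -/
lemma meas_card {ι Ω : Type*} [Fintype ι] [MeasurableSpace Ω] (g : ι → Ω → ℝ) (c : Ω → ℝ)
    (hg : ∀ π, Measurable (g π)) (hc : Measurable c) :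
    Measurable (fun ω => ((univ.filter fun π => g π ω < c ω).card : ℝ)) := by
  have heq : (fun ω => ((univ.filter fun π => g π ω < c ω).card : ℝ))
      = fun ω => ∑ π, if g π ω < c ω then (1 : ℝ) else 0 := by
    funext ω
    rw [Finset.card_filter]
    push_cast
    rfl
  rw [heq]
  exact Finset.measurable_sum _ fun π _ =>
    Measurable.ite (measurableSet_lt (hg π) hc) measurable_const measurable_const

lemma real_le_of_forall_pos_le_add {a b : ℝ} (h : ∀ ε, 0 < ε → a ≤ b + ε) : a ≤ b := by
  by_contra hab
  push_neg at hab
  have := h ((a - b) / 2) (by linarith)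
  linarith

set_option maxHeartbeats 1000000

/-- Theorem 1 (Approximate General Validity of Inductive Conformal Inference),
p-value statement: under approximate ergodicity, small estimation errors and a
bounded density for the oracle score, the randomized conformal p-value is
approximately uniformly distributed. -/
theorem approx_general_validity_pvalue
    {Ω : Type*} [MeasurableSpace Ω] (μ : Measure Ω) [IsProbabilityMeasure μ]
    {ι : Type*} [Fintype ι] (π₀ : ι) (d : ℕ) (hd : Fintype.card ι = d)
    (A Ao : ι → Ω → ℝ)
    (hA : ∀ π, Measurable (A π)) (hAo : ∀ π, Measurable (Ao π))
    (δ₁ δ₂ γ₁ γ₂ D : ℝ)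
    (hδ₁ : 0 ≤ δ₁) (hδ₂ : 0 ≤ δ₂) (hγ₁ : 0 ≤ γ₁) (hγ₂ : 0 ≤ γ₂) (hD : 0 ≤ D)
    -- the CDF of the oracle non-conformity score of the identity permutation
    (F : ℝ → ℝ) (hF : ∀ x, F x = (μ {ω | Ao π₀ ω < x}).toReal)
    -- the empirical CDF of the oracle scores over the permutations
    (Ftil : Ω → ℝ → ℝ)
    (hFtil : ∀ ω x, Ftil ω x =
      ((Finset.univ.filter fun π => Ao π ω < x).card : ℝ) / d)
    -- the randomized conformal p-value
    (phat : Ω → ℝ)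
    (hphat : ∀ ω, phat ω =
      ((Finset.univ.filter fun π => A π ω ≥ A π₀ ω).card : ℝ) / d)
    -- (1) approximate ergodicity
    (h1 : ENNReal.ofReal (1 - γ₁) ≤ μ {ω | ∀ x : ℝ, |Ftil ω x - F x| ≤ δ₁})
    -- (2) small estimation errors
    (h2 : ENNReal.ofReal (1 - γ₂) ≤
      μ {ω | (∑ π : ι, (A π ω - Ao π ω) ^ 2) / d ≤ δ₂ ^ 2 ∧
             |A π₀ ω - Ao π₀ ω| ≤ δ₂})
    -- (3) the law of the oracle score has a Lebesgue density bounded by D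
    (h3 : ∃ f : ℝ → ENNReal, μ.map (Ao π₀) = volume.withDensity f ∧
      ∀ᵐ x ∂(volume : Measure ℝ), f x ≤ ENNReal.ofReal D) :
    ∀ ε ∈ Set.Ioo (0 : ℝ) 1,
      |(μ {ω | phat ω ≤ ε}).toReal - ε| ≤
        6 * δ₁ + 4 * δ₂ + 2 * D * (δ₂ + 2 * Real.sqrt δ₂) + γ₁ + γ₂ := by
  classical
  obtain ⟨f, hmap, hfD⟩ := h3
  intro ε hε
  obtain ⟨hε0, hε1⟩ := hε
  have hι : Nonempty ι := ⟨π₀⟩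
  have hdpos : 0 < d := hd ▸ Fintype.card_pos
  have hdR : (0 : ℝ) < d := by exact_mod_cast hdpos
  set sqd := Real.sqrt δ₂ with hsqd
  have hsq0 : 0 ≤ sqd := Real.sqrt_nonneg δ₂
  set η := δ₁ + δ₂ + D * (δ₂ + sqd) with hη
  have hη0 : 0 ≤ η := by
    have : 0 ≤ D * (δ₂ + sqd) := mul_nonneg hD (by linarith)
    linarith
  set ν : Measure ℝ := μ.map (Ao π₀) with hν
  have hνprob : IsProbabilityMeasure ν := Measure.isProbabilityMeasure_map (hAo π₀).aemeasurable
  -- a set bound on density integrals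
  have hdens : ∀ s : Set ℝ, MeasurableSet s → ν s ≤ ENNReal.ofReal D * volume s := by
    intro s hs
    rw [show ν = volume.withDensity f from hmap, withDensity_apply _ hs]
    calc ∫⁻ y in s, f y ∂volume ≤ ∫⁻ _y in s, ENNReal.ofReal D ∂volume :=
          lintegral_mono_ae (ae_restrict_of_ae hfD)
      _ = ENNReal.ofReal D * volume s := by
          rw [lintegral_const, Measure.restrict_apply_univ]
  have hνatom : ∀ x : ℝ, ν {x} = 0 := by
    intro x
    have := hdens {x} (measurableSet_singleton x)
    simpa using this
  have hFx : ∀ x, F x = (ν (Set.Iio x)).toReal := by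
    intro x
    have hx : ν (Set.Iio x) = μ {ω | Ao π₀ ω < x} := by
      rw [hν, Measure.map_apply (hAo π₀) measurableSet_Iio]
      rfl
    rw [hF, hx]
  have hIic : ∀ x, ν (Set.Iio x) = ν (Set.Iic x) := fun x =>
    measure_congr (Iio_ae_eq_Iic' (hνatom x))
  have hmono : Monotone F := by
    intro a b hab
    rw [hFx, hFx]
    exact ENNReal.toReal_mono (measure_ne_top _ _) (measure_mono (Set.Iio_subset_Iio hab))
  -- Lipschitz property from the density bound
  have hLip : ∀ a b : ℝ, a ≤ b → F b ≤ F a + D * (b - a) := by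
    intro a b hab
    have hsplit : ν (Set.Iio b) ≤ ν (Set.Iio a) + ENNReal.ofReal (D * (b - a)) := by
      have hsub : Set.Iio b ⊆ Set.Iio a ∪ Set.Ico a b := by
        intro y hy
        rcases lt_or_ge y a with h | h
        · exact Or.inl h
        · exact Or.inr ⟨h, hy⟩
      calc ν (Set.Iio b) ≤ ν (Set.Iio a ∪ Set.Ico a b) := measure_mono hsub
        _ ≤ ν (Set.Iio a) + ν (Set.Ico a b) := measure_union_le _ _
        _ ≤ ν (Set.Iio a) + ENNReal.ofReal (D * (b - a)) := by
            gcongr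
            calc ν (Set.Ico a b) ≤ ENNReal.ofReal D * volume (Set.Ico a b) :=
                  hdens _ measurableSet_Ico
              _ = ENNReal.ofReal (D * (b - a)) := by
                  rw [Real.volume_Ico, ← ENNReal.ofReal_mul hD]
    rw [hFx, hFx]
    calc (ν (Set.Iio b)).toReal
        ≤ (ν (Set.Iio a) + ENNReal.ofReal (D * (b - a))).toReal := by
          apply ENNReal.toReal_mono _ hsplit
          exact ENNReal.add_ne_top.mpr ⟨measure_ne_top _ _, ENNReal.ofReal_ne_top⟩
      _ = (ν (Set.Iio a)).toReal + D * (b - a) := by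
          rw [ENNReal.toReal_add (measure_ne_top _ _) ENNReal.ofReal_ne_top,
            ENNReal.toReal_ofReal (mul_nonneg hD (by linarith))]
  have hFcont : Continuous F := by
    have : LipschitzWith (Real.toNNReal D) F := by
      apply LipschitzWith.of_dist_le_mul
      intro a b
      rw [Real.dist_eq, Real.dist_eq, Real.coe_toNNReal D hD]
      rcases le_total a b with h | h
      · have h1 := hLip a b h
        have h2 := hmono h
        rw [abs_of_nonpos (by linarith), abs_of_nonpos (by linarith)]
        nlinarith
      · have h1 := hLip b a h
        have h2 := hmono h
        rw [abs_of_nonneg (by linarith), abs_of_nonneg (by linarith)]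
        nlinarith
    exact this.continuous
  have hFtop : Filter.Tendsto F Filter.atTop (nhds 1) := by
    have h1' : Filter.Tendsto (fun x => ν (Set.Iic x)) Filter.atTop (nhds (ν Set.univ)) :=
      tendsto_measure_Iic_atTop ν
    have h2' := (ENNReal.tendsto_toReal (measure_ne_top ν Set.univ)).comp h1'
    have h3' : (ν Set.univ).toReal = 1 := by simp
    rw [h3'] at h2'
    refine h2'.congr fun x => ?_
    rw [Function.comp_apply, hFx, hIic]
  have hFbot : Filter.Tendsto F Filter.atBot (nhds 0) := by
    have h1' : Filter.Tendsto (fun x => ν (Set.Ici x)) Filter.atBot (nhds (ν Set.univ)) :=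
      tendsto_measure_Ici_atBot ν
    have h2' := (ENNReal.tendsto_toReal (measure_ne_top ν Set.univ)).comp h1'
    have h3' : (ν Set.univ).toReal = 1 := by simp
    rw [h3'] at h2'
    have h4' : Filter.Tendsto (fun x => 1 - (ν (Set.Ici x)).toReal) Filter.atBot
        (nhds (1 - 1)) := tendsto_const_nhds.sub h2'
    norm_num at h4'
    refine h4'.congr fun x => ?_
    have hc : ν (Set.Iio x) = ν Set.univ - ν (Set.Ici x) := by
      rw [← Set.compl_Ici, measure_compl measurableSet_Ici (measure_ne_top _ _)]
    rw [hFx, hc, ENNReal.toReal_sub_of_le (measure_mono (Set.subset_univ _))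
      (measure_ne_top _ _), h3']
  have hquant : ∀ s : ℝ, 0 < s → s < 1 → ∃ x, F x = s := by
    intro s hs0 hs1
    obtain ⟨x₁, hx₁⟩ := (hFbot.eventually_lt_const hs0).exists
    obtain ⟨x₂, hx₂⟩ := (hFtop.eventually_const_lt hs1).exists
    have hx12 : x₁ ≤ x₂ := by
      by_contra hcon
      push_neg at hcon
      have := hmono hcon.le
      linarith
    obtain ⟨x, _, hxF⟩ := intermediate_value_Icc hx12 hFcont.continuousOn ⟨hx₁.le, hx₂.le⟩
    exact ⟨x, hxF⟩
  have htR1 : ∀ S : Set Ω, (μ S).toReal ≤ 1 := by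
    intro S
    have h : μ S ≤ μ Set.univ := measure_mono (Set.subset_univ S)
    have := ENNReal.toReal_mono (measure_ne_top μ Set.univ) h
    simpa using this
  -- uniformity facts for U = F (Ao π₀ ·)
  have hUlt : ∀ s : ℝ, 0 < s → (μ {ω | F (Ao π₀ ω) < s}).toReal ≤ s := by
    intro s hs0
    rcases lt_or_ge s 1 with hs1 | hs1
    · obtain ⟨x, hx⟩ := hquant s hs0 hs1
      have hsub : {ω | F (Ao π₀ ω) < s} ⊆ {ω | Ao π₀ ω < x} := by
        intro ω hω
        simp only [Set.mem_setOf_eq] at hω ⊢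
        by_contra hcon
        push_neg at hcon
        have := hmono hcon
        rw [hx] at this
        linarith
      calc (μ {ω | F (Ao π₀ ω) < s}).toReal ≤ (μ {ω | Ao π₀ ω < x}).toReal :=
            ENNReal.toReal_mono (measure_ne_top _ _) (measure_mono hsub)
        _ = F x := (hF x).symm
        _ = s := hx
    · exact (htR1 _).trans hs1
  have hUmeas : Measurable fun ω => F (Ao π₀ ω) := (hmono.measurable).comp (hAo π₀)
  have hUge_lower : ∀ s : ℝ, 0 < s → 1 - s ≤ (μ {ω | s ≤ F (Ao π₀ ω)}).toReal := by
    intro s hs0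
    have hcompl : {ω | s ≤ F (Ao π₀ ω)} = {ω | F (Ao π₀ ω) < s}ᶜ := by
      ext ω; simp [not_lt]
    have hms : MeasurableSet {ω | F (Ao π₀ ω) < s} :=
      measurableSet_lt hUmeas measurable_const
    rw [hcompl, measure_compl hms (measure_ne_top _ _),
      ENNReal.toReal_sub_of_le (measure_mono (Set.subset_univ _)) (measure_ne_top _ _)]
    have := hUlt s hs0
    simp only [measure_univ, ENNReal.toReal_one]
    linarith
  have hUge_upper : ∀ s : ℝ, s < 1 → (μ {ω | s ≤ F (Ao π₀ ω)}).toReal ≤ 1 - s := by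
    intro s hs1
    rcases le_or_gt s 0 with hs0 | hs0
    · linarith [htR1 {ω | s ≤ F (Ao π₀ ω)}]
    · apply real_le_of_forall_pos_le_add
      intro ε' hε'
      set t := max (s - ε') (s / 2) with ht
      have ht0 : 0 < t := lt_max_of_lt_right (by linarith)
      have hts : t < s := max_lt (by linarith) (by linarith)
      obtain ⟨x, hx⟩ := hquant t ht0 (hts.trans hs1)
      have hsub : {ω | s ≤ F (Ao π₀ ω)} ⊆ {ω | Ao π₀ ω ≤ x}ᶜ := by
        intro ω hω
        simp only [Set.mem_compl_iff, Set.mem_setOf_eq, not_le] at hω ⊢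
        by_contra hcon
        push_neg at hcon
        have := hmono hcon
        rw [hx] at this
        linarith
      have hmx : MeasurableSet {ω | Ao π₀ ω ≤ x} :=
        measurableSet_le (hAo π₀) measurable_const
      have hle1 : (μ {ω | s ≤ F (Ao π₀ ω)}).toReal ≤ (μ {ω | Ao π₀ ω ≤ x}ᶜ).toReal :=
        ENNReal.toReal_mono (measure_ne_top _ _) (measure_mono hsub)
      have hle2 : (μ {ω | Ao π₀ ω ≤ x}ᶜ).toReal = 1 - (μ {ω | Ao π₀ ω ≤ x}).toReal := by
        rw [measure_compl hmx (measure_ne_top _ _),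
          ENNReal.toReal_sub_of_le (measure_mono (Set.subset_univ _)) (measure_ne_top _ _)]
        simp
      have hle3 : t ≤ (μ {ω | Ao π₀ ω ≤ x}).toReal := by
        have hsub2 : {ω | Ao π₀ ω < x} ⊆ {ω | Ao π₀ ω ≤ x} :=
          Set.setOf_subset_setOf.mpr fun ω h => le_of_lt h
        have hmm : μ {ω | Ao π₀ ω < x} ≤ μ {ω | Ao π₀ ω ≤ x} := measure_mono hsub2
        have := ENNReal.toReal_mono (measure_ne_top _ _) hmm
        rw [← hF x] at this
        linarith [hx ▸ this]
      have : s - ε' ≤ t := le_max_left _ _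
      linarith
  -- division helper
  have hdiv : ∀ N M : ℝ, N ≤ M + d * δ₂ → N / d ≤ M / d + δ₂ := by
    intro N M h
    have h2 : N / d ≤ (M + d * δ₂) / d := by gcongr
    have h3 : (M + d * δ₂) / d = M / d + δ₂ := by field_simp
    linarith
  -- combinatorial facts
  have hK2a : ∀ ω, (∑ π : ι, (A π ω - Ao π ω) ^ 2) / d ≤ δ₂ ^ 2 → ∀ x : ℝ,
      ((univ.filter fun π => A π ω < x).card : ℝ)
        ≤ ((univ.filter fun π => Ao π ω < x + sqd).card : ℝ) + d * δ₂ := by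
    intro ω hω x
    have hcheb := cheb_card (fun π => A π ω - Ao π ω) δ₂ hδ₂ (by
      rw [hd]
      rw [div_le_iff₀ hdR] at hω
      linarith)
    rw [hd] at hcheb
    have hsub : (univ.filter fun π => A π ω < x)
        ⊆ (univ.filter fun π => Ao π ω < x + sqd)
          ∪ (univ.filter fun π => Real.sqrt δ₂ < |A π ω - Ao π ω|) := by
      intro π hπ
      rw [Finset.mem_filter] at hπ
      rcases le_or_gt |A π ω - Ao π ω| sqd with hle | hlt
      · refine Finset.mem_union_left _ (Finset.mem_filter.mpr ⟨mem_univ _, ?_⟩)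
        have habs := abs_le.mp hle
        linarith [hπ.2, habs.1]
      · exact Finset.mem_union_right _ (Finset.mem_filter.mpr ⟨mem_univ _, hlt⟩)
    calc ((univ.filter fun π => A π ω < x).card : ℝ)
        ≤ (((univ.filter fun π => Ao π ω < x + sqd)
            ∪ (univ.filter fun π => Real.sqrt δ₂ < |A π ω - Ao π ω|)).card : ℝ) := by
          exact_mod_cast Finset.card_le_card hsub
      _ ≤ ((univ.filter fun π => Ao π ω < x + sqd).card : ℝ)
          + ((univ.filter fun π => Real.sqrt δ₂ < |A π ω - Ao π ω|).card : ℝ) := by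
          exact_mod_cast Finset.card_union_le _ _
      _ ≤ _ := by linarith [hcheb]
  have hK2b : ∀ ω, (∑ π : ι, (A π ω - Ao π ω) ^ 2) / d ≤ δ₂ ^ 2 → ∀ x : ℝ,
      ((univ.filter fun π => Ao π ω < x - sqd).card : ℝ)
        ≤ ((univ.filter fun π => A π ω < x).card : ℝ) + d * δ₂ := by
    intro ω hω x
    have hcheb := cheb_card (fun π => A π ω - Ao π ω) δ₂ hδ₂ (by
      rw [hd]
      rw [div_le_iff₀ hdR] at hω
      linarith)
    rw [hd] at hcheb
    have hsub : (univ.filter fun π => Ao π ω < x - sqd)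
        ⊆ (univ.filter fun π => A π ω < x)
          ∪ (univ.filter fun π => Real.sqrt δ₂ < |A π ω - Ao π ω|) := by
      intro π hπ
      rw [Finset.mem_filter] at hπ
      rcases le_or_gt |A π ω - Ao π ω| sqd with hle | hlt
      · refine Finset.mem_union_left _ (Finset.mem_filter.mpr ⟨mem_univ _, ?_⟩)
        have habs := abs_le.mp hle
        linarith [hπ.2, habs.2]
      · exact Finset.mem_union_right _ (Finset.mem_filter.mpr ⟨mem_univ _, hlt⟩)
    calc ((univ.filter fun π => Ao π ω < x - sqd).card : ℝ)
        ≤ (((univ.filter fun π => A π ω < x)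
            ∪ (univ.filter fun π => Real.sqrt δ₂ < |A π ω - Ao π ω|)).card : ℝ) := by
          exact_mod_cast Finset.card_le_card hsub
      _ ≤ ((univ.filter fun π => A π ω < x).card : ℝ)
          + ((univ.filter fun π => Real.sqrt δ₂ < |A π ω - Ao π ω|).card : ℝ) := by
          exact_mod_cast Finset.card_union_le _ _
      _ ≤ _ := by linarith [hcheb]
  -- rewrite phat
  have hphat' : ∀ ω, phat ω = 1 - ((univ.filter fun π => A π ω < A π₀ ω).card : ℝ) / d := by
    intro ω
    rw [hphat]
    have hset : (univ.filter fun π => A π ω ≥ A π₀ ω)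
        = univ \ (univ.filter fun π => A π ω < A π₀ ω) := by
      rw [← Finset.filter_not]
      apply Finset.filter_congr
      intro π _
      simp [not_lt, ge_iff_le]
    have hle : (univ.filter fun π => A π ω < A π₀ ω).card ≤ d := by
      rw [← hd, ← Finset.card_univ]
      exact Finset.card_le_card (Finset.filter_subset _ _)
    rw [hset, Finset.card_sdiff_of_subset (Finset.filter_subset _ _), Finset.card_univ, hd,
      Nat.cast_sub hle, sub_div, div_self hdR.ne']
  have hiff : ∀ ω, (phat ω ≤ ε ↔
      1 - ε ≤ ((univ.filter fun π => A π ω < A π₀ ω).card : ℝ) / d) := by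
    intro ω
    rw [hphat' ω]
    constructor <;> intro h <;> linarith
  -- good sets
  set G1 : Set Ω := {ω | |Ftil ω (A π₀ ω + sqd) - F (A π₀ ω + sqd)| ≤ δ₁
      ∧ |Ftil ω (A π₀ ω - sqd) - F (A π₀ ω - sqd)| ≤ δ₁} with hG1
  set G2 : Set Ω := {ω | (∑ π : ι, (A π ω - Ao π ω) ^ 2) / ↑d ≤ δ₂ ^ 2
      ∧ |A π₀ ω - Ao π₀ ω| ≤ δ₂} with hG2
  have hsub1 : {ω | ∀ x : ℝ, |Ftil ω x - F x| ≤ δ₁} ⊆ G1 := fun ω hω => ⟨hω _, hω _⟩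
  have hFtilmeas : ∀ (c : Ω → ℝ), Measurable c → Measurable fun ω => Ftil ω (c ω) := by
    intro c hc
    have heq : (fun ω => Ftil ω (c ω)) = fun ω =>
        ((univ.filter fun π => Ao π ω < c ω).card : ℝ) / d := by
      funext ω
      rw [hFtil]
    exact heq ▸ ((meas_card Ao c hAo hc).div_const (d : ℝ))
  have hG1meas : MeasurableSet G1 := by
    rw [hG1, Set.setOf_and]
    refine MeasurableSet.inter ?_ ?_
    · exact measurableSet_le (((hFtilmeas _ ((hA π₀).add_const sqd)).sub
        (hmono.measurable.comp ((hA π₀).add_const sqd))).abs) measurable_const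
    · exact measurableSet_le (((hFtilmeas _ ((hA π₀).sub_const sqd)).sub
        (hmono.measurable.comp ((hA π₀).sub_const sqd))).abs) measurable_const
  have hG2meas : MeasurableSet G2 := by
    rw [hG2, Set.setOf_and]
    refine MeasurableSet.inter ?_ ?_
    · exact measurableSet_le
        ((Finset.measurable_sum univ fun π _ =>
          ((hA π).sub (hAo π)).pow_const 2).div_const _) measurable_const
    · exact measurableSet_le (((hA π₀).sub (hAo π₀)).abs) measurable_const
  -- pointwise estimate
  have hmain : ∀ ω, ω ∈ G1 → ω ∈ G2 →
      |((univ.filter fun π => A π ω < A π₀ ω).card : ℝ) / d - F (Ao π₀ ω)| ≤ η := by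
    intro ω hω1 hω2
    obtain ⟨hp, hm⟩ := hω1
    obtain ⟨hsum, hpt⟩ := hω2
    have hptb := abs_le.mp hpt
    have s1 : ((univ.filter fun π => A π ω < A π₀ ω).card : ℝ) / d
        ≤ Ftil ω (A π₀ ω + sqd) + δ₂ := by
      rw [hFtil]
      exact hdiv _ _ (hK2a ω hsum (A π₀ ω))
    have s2 := abs_le.mp hp
    have s3 : F (A π₀ ω + sqd) ≤ F (Ao π₀ ω + δ₂ + sqd) := hmono (by linarith)
    have s4 : F (Ao π₀ ω + δ₂ + sqd) ≤ F (Ao π₀ ω) + D * (δ₂ + sqd) := by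
      have hh := hLip (Ao π₀ ω) (Ao π₀ ω + δ₂ + sqd) (by linarith)
      have he : Ao π₀ ω + δ₂ + sqd - Ao π₀ ω = δ₂ + sqd := by ring
      rw [he] at hh
      exact hh
    have t1 : Ftil ω (A π₀ ω - sqd)
        ≤ ((univ.filter fun π => A π ω < A π₀ ω).card : ℝ) / d + δ₂ := by
      rw [hFtil]
      exact hdiv _ _ (hK2b ω hsum (A π₀ ω))
    have t2 := abs_le.mp hm
    have t3 : F (Ao π₀ ω - δ₂ - sqd) ≤ F (A π₀ ω - sqd) := hmono (by linarith)
    have t4 : F (Ao π₀ ω) ≤ F (Ao π₀ ω - δ₂ - sqd) + D * (δ₂ + sqd) := by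
      have hh := hLip (Ao π₀ ω - δ₂ - sqd) (Ao π₀ ω) (by linarith)
      have he : Ao π₀ ω - (Ao π₀ ω - δ₂ - sqd) = δ₂ + sqd := by ring
      rw [he] at hh
      exact hh
    rw [abs_le]
    constructor
    · simp only [hη]
      linarith
    · simp only [hη]
      linarith
  -- event inclusions
  have hIncl2 : {ω | phat ω ≤ ε} ⊆ {ω | 1 - ε - η ≤ F (Ao π₀ ω)} ∪ (G1ᶜ ∪ G2ᶜ) := by
    intro ω hω
    by_cases h1ω : ω ∈ G1
    · by_cases h2ω : ω ∈ G2
      · left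
        have hmn := abs_le.mp (hmain ω h1ω h2ω)
        have hge := (hiff ω).mp hω
        show 1 - ε - η ≤ F (Ao π₀ ω)
        linarith [hmn.2]
      · exact Or.inr (Or.inr h2ω)
    · exact Or.inr (Or.inl h1ω)
  have hIncl1 : {ω | 1 - ε + η ≤ F (Ao π₀ ω)} ⊆ {ω | phat ω ≤ ε} ∪ (G1ᶜ ∪ G2ᶜ) := by
    intro ω hω
    by_cases h1ω : ω ∈ G1
    · by_cases h2ω : ω ∈ G2
      · left
        have hmn := abs_le.mp (hmain ω h1ω h2ω)
        have hU : 1 - ε + η ≤ F (Ao π₀ ω) := hω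
        show phat ω ≤ ε
        exact (hiff ω).mpr (by linarith [hmn.1])
      · exact Or.inr (Or.inr h2ω)
    · exact Or.inr (Or.inl h1ω)
  -- bad set bounds
  have hbad : ∀ (G : Set Ω) (γ : ℝ), 0 ≤ γ → MeasurableSet G →
      ENNReal.ofReal (1 - γ) ≤ μ G → (μ Gᶜ).toReal ≤ γ := by
    intro G γ hγ hGm hμG
    rcases le_or_gt 1 γ with h | h
    · linarith [htR1 Gᶜ]
    · have h1γ : (1 - γ) ≤ (μ G).toReal := by
        have := ENNReal.toReal_mono (measure_ne_top _ _) hμG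
        rwa [ENNReal.toReal_ofReal (by linarith)] at this
      rw [measure_compl hGm (measure_ne_top _ _),
        ENNReal.toReal_sub_of_le (measure_mono (Set.subset_univ _)) (measure_ne_top _ _)]
      simp only [measure_univ, ENNReal.toReal_one]
      linarith
  have hbad1 : (μ G1ᶜ).toReal ≤ γ₁ := hbad G1 γ₁ hγ₁ hG1meas (le_trans h1 (measure_mono hsub1))
  have hbad2 : (μ G2ᶜ).toReal ≤ γ₂ := hbad G2 γ₂ hγ₂ hG2meas h2
  -- three-set bound
  have hsum3 : ∀ (S T U V : Set Ω), S ⊆ T ∪ (U ∪ V) →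
      (μ S).toReal ≤ (μ T).toReal + (μ U).toReal + (μ V).toReal := by
    intro S T U V hsub
    have hm1 : μ S ≤ μ T + (μ U + μ V) :=
      (measure_mono hsub).trans ((measure_union_le _ _).trans
        (by gcongr; exact measure_union_le _ _))
    have hm2 : (μ S).toReal ≤ (μ T + (μ U + μ V)).toReal := by
      apply ENNReal.toReal_mono _ hm1
      exact ENNReal.add_ne_top.mpr ⟨measure_ne_top _ _,
        ENNReal.add_ne_top.mpr ⟨measure_ne_top _ _, measure_ne_top _ _⟩⟩
    rw [ENNReal.toReal_add (measure_ne_top _ _)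
        (ENNReal.add_ne_top.mpr ⟨measure_ne_top _ _, measure_ne_top _ _⟩),
      ENNReal.toReal_add (measure_ne_top _ _) (measure_ne_top _ _)] at hm2
    linarith
  have hup : (μ {ω | phat ω ≤ ε}).toReal ≤ (ε + η) + γ₁ + γ₂ := by
    have hs := hsum3 _ _ _ _ hIncl2
    have hEmb : (μ {ω | 1 - ε - η ≤ F (Ao π₀ ω)}).toReal ≤ ε + η := by
      have hh := hUge_upper (1 - ε - η) (by linarith)
      linarith
    linarith
  have hlow : ε - η - γ₁ - γ₂ ≤ (μ {ω | phat ω ≤ ε}).toReal := by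
    have hs := hsum3 _ _ _ _ hIncl1
    have hEpb : ε - η ≤ (μ {ω | 1 - ε + η ≤ F (Ao π₀ ω)}).toReal := by
      have hh := hUge_lower (1 - ε + η) (by linarith)
      linarith
    linarith
  have hbig : η ≤ 6 * δ₁ + 4 * δ₂ + 2 * D * (δ₂ + 2 * sqd) := by
    simp only [hη]
    nlinarith [mul_nonneg hD hδ₂, mul_nonneg hD hsq0]
  rw [abs_le]
  constructor
  · linarith
  · linarith
end

section
/- Let (Ω, P) be a probability space, Π a finite index set of size d with a distinguished element π₀, and for each π ∈ Π let A_π and A°_π be real-valued random variables. Let F(x) = P(A°_{π₀} < x), F̃(x) = (1/d)·#{π ∈ Π : A°_π < x}, F̂(x) = (1/d)·#{π ∈ Π : A_π < x}, and p̂ = (1/d)·#{π ∈ Π : A_π ≥ A_{π₀}}. Assume: (1) with probability at least 1 − γ₁, sup_{x ∈ ℝ} |F̃(x) − F(x)| ≤ δ₁; (2) with probability at least 1 − γ₂, both (1/d)·Σ_{π ∈ Π} (A_π − A°_π)² ≤ δ₂² and |A_{π₀} − A°_{π₀}| ≤ δ₂; and (3) the law of A°_{π₀} has a density bounded above by D.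 Define the conformal prediction event at level 1 − ε as {p̂ > ε} (membership of the true future trajectory in the conformal set C_{1−ε}). Then for every ε ∈ (0, 1), |P(p̂ > ε) − (1 − ε)| ≤ 6δ₁ + 4δ₂ + 2D(δ₂ + 2√δ₂) + γ₁ + γ₂. -/
/-!
Write `Ĝ` for the empirical CDF of the estimated scores `A`. Since `p̂ = 1 - Ĝ (A π₀)`, the
event `ε < p̂` is `Ĝ (A π₀) < 1 - ε`. On the good events of (1) and (2), Markov's inequality
leaves at most a `δ₂`-fraction of indices with `|A π - Ao π| > √δ₂`, so `Ĝ` is squeezed between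
shifts by `±√δ₂` of the oracle empirical CDF, up to `δ₂`; by (1) and the `D`-Lipschitz
continuity of `F` coming from (3), `Ĝ (A π₀)` is then within `δ₁ + δ₂ + D (√δ₂ + δ₂)` of
`F (Ao π₀)`. As `F` is continuous, `F (Ao π₀)` is uniformly distributed on `[0, 1]`, and the
bad events cost at most `γ₁ + γ₂`.
-/

open MeasureTheory ProbabilityTheory Finset

noncomputable def empiricalCDF {ι : Type*} [Fintype ι] (a : ι → ℝ) (x : ℝ) : ℝ :=
  #{π | a π < x} / Fintype.card ι

section Empirical

variable {ι : Type*} [Fintype ι]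

lemma one_sub_empiricalCDF [Nonempty ι] (a : ι → ℝ) (x : ℝ) :
    1 - empiricalCDF a x = #{π | x ≤ a π} / Fintype.card ι := by
  have hcard : (#{π | a π < x} : ℝ) + #{π | x ≤ a π} = Fintype.card ι := by
    have := card_filter_add_card_filter_not (s := univ) fun π => a π < x
    simp only [not_lt, card_univ] at this
    exact_mod_cast this
  have hpos : (0 : ℝ) < Fintype.card ι := by exact_mod_cast Fintype.card_pos
  rw [empiricalCDF, eq_div_iff hpos.ne', sub_mul, div_mul_cancel₀ _ hpos.ne']
  linarith

lemma empiricalCDF_le_add (a b : ι → ℝ) (x : ℝ) {t : ℝ} (s : Finset ι)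
    (hs : ∀ π ∉ s, |a π - b π| ≤ t) :
    empiricalCDF a x ≤ empiricalCDF b (x + t) + #s / Fintype.card ι := by
  classical
  have hsub : ({π | a π < x} : Finset ι) ⊆ ({π | b π < x + t} : Finset ι) ∪ s := by
    intro π hπ
    by_cases hπs : π ∈ s
    · exact mem_union_right _ hπs
    · have := (abs_le.1 (hs π hπs)).1
      simp only [mem_filter, mem_univ, true_and] at hπ
      exact mem_union_left _ (by simp only [mem_filter, mem_univ, true_and]; linarith)
  have hcard : (#{π | a π < x} : ℝ) ≤ #{π | b π < x + t} + #s := by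
    exact_mod_cast (card_le_card hsub).trans (card_union_le _ _)
  rw [empiricalCDF, empiricalCDF, ← add_div]
  gcongr

lemma card_sqrt_lt_abs_div_le (e : ι → ℝ) {δ : ℝ} (hδ : 0 ≤ δ)
    (he : (∑ π, e π ^ 2) / Fintype.card ι ≤ δ ^ 2) :
    (#{π | √δ < |e π|} : ℝ) / Fintype.card ι ≤ δ := by
  rcases isEmpty_or_nonempty ι with hι | hι
  · simp [hδ]
  have hpos : (0 : ℝ) < Fintype.card ι := by exact_mod_cast Fintype.card_pos
  rw [div_le_iff₀ hpos] at he ⊢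
  rcases hδ.eq_or_lt with rfl | hδ
  · have hzero : ∀ π, e π = 0 := by
      have := (sum_eq_zero_iff_of_nonneg fun π _ => sq_nonneg (e π)).1
        (le_antisymm (by simpa using he) (sum_nonneg fun π _ => sq_nonneg _))
      simpa using this
    simp [hzero]
  have hmarkov : (#{π | √δ < |e π|} : ℝ) * δ ≤ ∑ π, e π ^ 2 := by
    calc (#{π | √δ < |e π|} : ℝ) * δ = ∑ π ∈ {π | √δ < |e π|}, δ := by
          rw [sum_const, nsmul_eq_mul]
      _ ≤ ∑ π ∈ {π | √δ < |e π|}, e π ^ 2 := by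
          refine sum_le_sum fun π hπ => ?_
          rw [← sq_abs, ← Real.sq_sqrt hδ.le]
          exact pow_le_pow_left₀ (Real.sqrt_nonneg _) (mem_filter.1 hπ).2.le 2
      _ ≤ ∑ π, e π ^ 2 := sum_le_sum_of_subset_of_nonneg (subset_univ _)
          fun π _ _ => sq_nonneg _
  nlinarith

lemma abs_empiricalCDF_sub_le {G : ℝ → ℝ} {K : NNReal} (hG : LipschitzWith K G)
    (a b : ι → ℝ) (i : ι) {δ₁ δ₂ : ℝ} (h₁ : ∀ x, |empiricalCDF b x - G x| ≤ δ₁) (hδ₂ : 0 ≤ δ₂)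
    (hsq : (∑ π, (a π - b π) ^ 2) / Fintype.card ι ≤ δ₂ ^ 2) (hi : |a i - b i| ≤ δ₂) :
    |empiricalCDF a (a i) - G (b i)| ≤ δ₁ + δ₂ + K * (√δ₂ + δ₂) := by
  set t := √δ₂
  set s : Finset ι := {π | t < |a π - b π|}
  have hs : ∀ π ∉ s, |a π - b π| ≤ t := by simp [s]
  have hs_card : (#s : ℝ) / Fintype.card ι ≤ δ₂ := card_sqrt_lt_abs_div_le _ hδ₂ hsq
  have hG_le (x y : ℝ) : G x ≤ G y + K * |x - y| := by
    simpa [Real.dist_eq] using hG.le_add_mul x y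
  have ht : 0 ≤ t := Real.sqrt_nonneg _
  obtain ⟨hi₁, hi₂⟩ := abs_le.1 hi
  rw [abs_le]
  constructor
  · have h_ab := empiricalCDF_le_add b a (a i - t) s fun π hπ => abs_sub_comm (b π) _ ▸ hs π hπ
    have h_G := hG_le (b i) (a i - t)
    have h_dist : |b i - (a i - t)| ≤ t + δ₂ := abs_le.2 ⟨by linarith, by linarith⟩
    have h_b := (abs_le.1 (h₁ (a i - t))).1
    rw [sub_add_cancel] at h_ab
    linarith [mul_le_mul_of_nonneg_left h_dist K.coe_nonneg]
  · have h_ab := empiricalCDF_le_add a b (a i) s hs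
    have h_G := hG_le (a i + t) (b i)
    have h_dist : |a i + t - b i| ≤ t + δ₂ := abs_le.2 ⟨by linarith, by linarith⟩
    have h_b := (abs_le.1 (h₁ (a i + t))).2
    linarith [mul_le_mul_of_nonneg_left h_dist K.coe_nonneg]

end Empirical

lemma measurable_empiricalCDF {Ω ι : Type*} [MeasurableSpace Ω] [Fintype ι] {a : ι → Ω → ℝ}
    {x : Ω → ℝ} (ha : ∀ π, Measurable (a π)) (hx : Measurable x) :
    Measurable fun ω => empiricalCDF (a · ω) (x ω) := by
  simp only [empiricalCDF, card_filter, Nat.cast_sum, Nat.cast_ite, Nat.cast_one, Nat.cast_zero]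
  exact (measurable_sum _ fun π _ =>
    Measurable.ite (measurableSet_lt (ha π) hx) measurable_const measurable_const).div_const _

section ProbabilityIntegralTransform

variable {Ω : Type*} [MeasurableSpace Ω] {μ : Measure Ω} [IsProbabilityMeasure μ]
  {Y : Ω → ℝ} {F : ℝ → ℝ}

lemma measureReal_lt_le_add_of_map_le {D x y : ℝ} (hY : Measurable Y)
    (hlaw : μ.map Y ≤ ENNReal.ofReal D • volume) (hD : 0 ≤ D) (hyx : y ≤ x) :
    μ.real {ω | Y ω < x} ≤ μ.real {ω | Y ω < y} + D * (x - y) := by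
  have hsub : {ω | Y ω < x} ⊆ {ω | Y ω < y} ∪ Y ⁻¹' Set.Ico y x := fun ω hω => by
    by_cases h : Y ω < y
    · exact Or.inl h
    · exact Or.inr ⟨not_lt.1 h, hω⟩
  have hIco : μ.real (Y ⁻¹' Set.Ico y x) ≤ D * (x - y) := by
    refine ENNReal.toReal_le_of_le_ofReal (mul_nonneg hD (sub_nonneg.2 hyx)) ?_
    calc μ (Y ⁻¹' Set.Ico y x) = μ.map Y (Set.Ico y x) :=
          (Measure.map_apply hY measurableSet_Ico).symm
      _ ≤ (ENNReal.ofReal D • volume) (Set.Ico y x) := hlaw _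
      _ = ENNReal.ofReal (D * (x - y)) := by
        simp [Real.volume_Ico, ENNReal.ofReal_mul hD]
  linarith [(measureReal_mono (μ := μ) hsub).trans (measureReal_union_le _ _)]

variable (hF : ∀ x, F x = μ.real {ω | Y ω < x})
include hF

lemma monotone_of_eq_measureReal_lt : Monotone F := fun x y hxy => by
  rw [hF, hF]
  exact measureReal_mono fun ω hω => lt_of_lt_of_le hω hxy

lemma lipschitzWith_of_map_le_smul_volume {D : ℝ} (hY : Measurable Y)
    (hlaw : μ.map Y ≤ ENNReal.ofReal D • volume) (hD : 0 ≤ D) :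
    LipschitzWith D.toNNReal F := by
  refine LipschitzWith.of_le_add_mul' D fun x y => ?_
  rw [Real.dist_eq]
  rcases le_total x y with hxy | hyx
  · linarith [monotone_of_eq_measureReal_lt hF hxy, mul_nonneg hD (abs_nonneg (x - y))]
  · rw [hF, hF, abs_of_nonneg (sub_nonneg.2 hyx)]
    exact measureReal_lt_le_add_of_map_le hY hlaw hD hyx

lemma exists_cdf_eq_of_continuous (hY : Measurable Y) (hcont : Continuous F) {u : ℝ}
    (hu : u ∈ Set.Ioo 0 1) : ∃ x, F x = u := by
  let ν := μ.map Y
  have : IsProbabilityMeasure ν := Measure.isProbabilityMeasure_map hY.aemeasurable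
  have hFν (x : ℝ) : F x = ν.real (Set.Iio x) := by
    rw [hF, map_measureReal_apply hY measurableSet_Iio]
    rfl
  obtain ⟨a, ha⟩ := ((tendsto_cdf_atBot (μ := ν)).eventually_lt_const hu.1).exists
  obtain ⟨b, hb⟩ := ((tendsto_cdf_atTop (μ := ν)).eventually_const_lt hu.2).exists
  have hFa : F a < u := by
    rw [hFν]
    exact (measureReal_mono Set.Iio_subset_Iic_self).trans_lt (cdf_eq_real ν a ▸ ha)
  have hFb : u < F (b + 1) := by
    rw [hFν]
    exact (cdf_eq_real ν b ▸ hb).trans_le (measureReal_mono (Set.Iic_subset_Iio.2 (lt_add_one b)))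
  exact intermediate_value_univ a (b + 1) hcont ⟨hFa.le, hFb.le⟩

lemma measureReal_comp_lt_le (hY : Measurable Y) (hcont : Continuous F) {u : ℝ} (hu : 0 < u) :
    μ.real {ω | F (Y ω) < u} ≤ u := by
  rcases lt_or_ge u 1 with hu1 | hu1
  · obtain ⟨x, hx⟩ := exists_cdf_eq_of_continuous hF hY hcont ⟨hu, hu1⟩
    calc μ.real {ω | F (Y ω) < u} ≤ μ.real {ω | Y ω < x} :=
          measureReal_mono fun ω (hω : F (Y ω) < u) => not_le.1 fun h =>
            (hx.symm.trans_le (monotone_of_eq_measureReal_lt hF h)).not_gt hω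
      _ = u := (hF x).symm.trans hx
  · exact measureReal_le_one.trans hu1

lemma le_measureReal_comp_lt (hY : Measurable Y) (hcont : Continuous F) {u : ℝ} (hu : u ≤ 1) :
    u ≤ μ.real {ω | F (Y ω) < u} := by
  refine le_of_forall_lt_imp_le_of_dense fun v hv => ?_
  rcases le_or_gt v 0 with hv0 | hv0
  · exact hv0.trans measureReal_nonneg
  obtain ⟨x, hx⟩ := exists_cdf_eq_of_continuous hF hY hcont ⟨hv0, hv.trans_le hu⟩
  calc v = μ.real {ω | Y ω < x} := hx.symm.trans (hF x)
    _ ≤ μ.real {ω | F (Y ω) < u} := measureReal_mono fun ω (hω : Y ω < x) =>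
          ((monotone_of_eq_measureReal_lt hF hω.le).trans_eq hx).trans_lt hv

end ProbabilityIntegralTransform

section Events

variable {Ω : Type*} [MeasurableSpace Ω] {μ : Measure Ω} [IsProbabilityMeasure μ]

lemma measureReal_le_add_of_forall_mem {S T E₁ E₂ : Set Ω} (hST : MeasurableSet (S \ T))
    (hE₂ : MeasurableSet E₂) (h : ∀ ω ∈ S, ω ∈ E₁ → ω ∈ E₂ → ω ∈ T) :
    μ.real S ≤ μ.real T + (1 - μ.real E₁) + (1 - μ.real E₂) := by
  have hS : μ.real S ≤ μ.real T + μ.real (S \ T) :=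
    (measureReal_mono (by simp)).trans (measureReal_union_le _ _)
  have hST₂ : μ.real (S \ T) ≤ μ.real (S \ T ∩ E₂) + μ.real E₂ᶜ := by
    refine (measureReal_mono fun ω hω => ?_).trans (measureReal_union_le _ _)
    by_cases hω₂ : ω ∈ E₂
    · exact Or.inl ⟨hω, hω₂⟩
    · exact Or.inr hω₂
  have hdisj : Disjoint (S \ T ∩ E₂) E₁ :=
    Set.disjoint_left.2 fun ω ⟨⟨hS, hT⟩, h₂⟩ h₁ => hT (h ω hS h₁ h₂)
  have hE₁ : μ.real (S \ T ∩ E₂) + μ.real E₁ ≤ 1 :=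
    measureReal_union' (μ := μ) hdisj (hST.inter hE₂) ▸ measureReal_le_one
  linarith [probReal_compl_eq_one_sub (μ := μ) hE₂]

lemma abs_measureReal_lt_sub_le {Z X : Ω → ℝ} {E₁ E₂ : Set Ω} {c v : ℝ} (hZ : Measurable Z)
    (hX : Measurable X) (hE₂ : MeasurableSet E₂)
    (hclose : ∀ ω ∈ E₁, ω ∈ E₂ → |Z ω - X ω| ≤ c)
    (hup : μ.real {ω | X ω < v + c} ≤ v + c) (hlow : v - c ≤ μ.real {ω | X ω < v - c}) :
    |μ.real {ω | Z ω < v} - v| ≤ c + (1 - μ.real E₁) + (1 - μ.real E₂) := by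
  have hZ_le := measureReal_le_add_of_forall_mem (μ := μ) (T := {ω | X ω < v + c})
    ((measurableSet_lt hZ measurable_const).diff (measurableSet_lt hX measurable_const)) hE₂
    fun ω (hω : Z ω < v) h₁ h₂ => show X ω < v + c by linarith [abs_le.1 (hclose ω h₁ h₂)]
  have hZ_ge := measureReal_le_add_of_forall_mem (μ := μ) (T := {ω | Z ω < v})
    ((measurableSet_lt hX measurable_const).diff (measurableSet_lt hZ measurable_const)) hE₂
    fun ω (hω : X ω < v - c) h₁ h₂ => show Z ω < v by linarith [abs_le.1 (hclose ω h₁ h₂)]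
  rw [abs_le]
  constructor <;> linarith

end Events

theorem approx_general_validity_coverage_general
    {Ω : Type*} [MeasurableSpace Ω] (μ : Measure Ω) [IsProbabilityMeasure μ]
    {ι : Type*} [Fintype ι] (π₀ : ι) (d : ℕ) (hd : Fintype.card ι = d)
    (A Ao : ι → Ω → ℝ)
    (hA : ∀ π, Measurable (A π)) (hAo : ∀ π, Measurable (Ao π))
    (δ₁ δ₂ γ₁ γ₂ D : ℝ)
    (hδ₁ : 0 ≤ δ₁) (hδ₂ : 0 ≤ δ₂) (hD : 0 ≤ D)
    -- the CDF of the oracle non-conformity score of the identity permutation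
    (F : ℝ → ℝ) (hF : ∀ x, F x = (μ {ω | Ao π₀ ω < x}).toReal)
    -- the empirical CDF of the oracle scores over the permutations
    (Ftil : Ω → ℝ → ℝ)
    (hFtil : ∀ ω x, Ftil ω x =
      ((Finset.univ.filter fun π => Ao π ω < x).card : ℝ) / d)
    -- the randomized conformal p-value
    (phat : Ω → ℝ)
    (hphat : ∀ ω, phat ω =
      ((Finset.univ.filter fun π => A π ω ≥ A π₀ ω).card : ℝ) / d)
    -- (1) approximate ergodicity
    (h1 : ENNReal.ofReal (1 - γ₁) ≤ μ {ω | ∀ x : ℝ, |Ftil ω x - F x| ≤ δ₁})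
    -- (2) small estimation errors
    (h2 : ENNReal.ofReal (1 - γ₂) ≤
      μ {ω | (∑ π : ι, (A π ω - Ao π ω) ^ 2) / d ≤ δ₂ ^ 2 ∧
             |A π₀ ω - Ao π₀ ω| ≤ δ₂})
    -- (3) the law of the oracle score has a Lebesgue density bounded by D
    (h3 : ∃ f : ℝ → ENNReal, μ.map (Ao π₀) = volume.withDensity f ∧
      ∀ᵐ x ∂(volume : Measure ℝ), f x ≤ ENNReal.ofReal D) :
    ∀ ε ∈ Set.Ioo (0 : ℝ) 1,
      |(μ {ω | ε < phat ω}).toReal - (1 - ε)| ≤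
        6 * δ₁ + 4 * δ₂ + 2 * D * (δ₂ + 2 * Real.sqrt δ₂) + γ₁ + γ₂ := by
  rintro ε ⟨hε₀, hε₁⟩
  subst hd
  obtain ⟨f, hmap, hf⟩ := h3
  have : Nonempty ι := ⟨π₀⟩
  have hlaw : μ.map (Ao π₀) ≤ ENNReal.ofReal D • volume :=
    hmap ▸ (withDensity_mono hf).trans_eq (withDensity_const _)
  have hF_lip := lipschitzWith_of_map_le_smul_volume hF (hAo π₀) hlaw hD
  set E₁ := {ω | ∀ x, |Ftil ω x - F x| ≤ δ₁}
  set E₂ := {ω | (∑ π, (A π ω - Ao π ω) ^ 2) / Fintype.card ι ≤ δ₂ ^ 2 ∧ |A π₀ ω - Ao π₀ ω| ≤ δ₂}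
  set c := δ₁ + δ₂ + D * (√δ₂ + δ₂)
  have hc₀ : 0 ≤ c := by positivity
  have hclose : ∀ ω ∈ E₁, ω ∈ E₂ → |empiricalCDF (A · ω) (A π₀ ω) - F (Ao π₀ ω)| ≤ c := by
    rintro ω h₁ ⟨hsq, hi⟩
    have h₁' (x : ℝ) : |empiricalCDF (Ao · ω) x - F x| ≤ δ₁ := by
      rw [empiricalCDF, ← hFtil]
      exact h₁ x
    simpa only [Real.coe_toNNReal D hD] using
      abs_empiricalCDF_sub_le hF_lip _ _ π₀ h₁' hδ₂ hsq hi
  have hE₂ : MeasurableSet E₂ := by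
    simp only [E₂, Set.ofPred_and]
    exact (measurableSet_le (by fun_prop) measurable_const).inter
      (measurableSet_le (by fun_prop) measurable_const)
  have hbound := abs_measureReal_lt_sub_le (v := 1 - ε)
    (measurable_empiricalCDF hA (hA π₀)) (hF_lip.continuous.measurable.comp (hAo π₀)) hE₂ hclose
    (measureReal_comp_lt_le hF (hAo π₀) hF_lip.continuous (by linarith))
    (le_measureReal_comp_lt hF (hAo π₀) hF_lip.continuous (by linarith))
  have hT : {ω | ε < phat ω} = {ω | empiricalCDF (A · ω) (A π₀ ω) < 1 - ε} := by
    ext ω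
    simp only [Set.mem_ofPred_eq, hphat, ge_iff_le, ← one_sub_empiricalCDF]
    constructor <;> intro <;> linarith
  have hE₁_prob : 1 - γ₁ ≤ μ.real E₁ := (ENNReal.ofReal_le_iff_le_toReal (measure_ne_top _ _)).1 h1
  have hE₂_prob : 1 - γ₂ ≤ μ.real E₂ := (ENNReal.ofReal_le_iff_le_toReal (measure_ne_top _ _)).1 h2
  have hc : c ≤ 6 * δ₁ + 4 * δ₂ + 2 * D * (δ₂ + 2 * √δ₂) := by
    nlinarith [mul_nonneg hD (Real.sqrt_nonneg δ₂), mul_nonneg hD hδ₂]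
  rw [← measureReal_def, hT]
  linarith

/-- Theorem 1 (Approximate General Validity of Inductive Conformal Inference),
coverage statement: the conformal prediction set built by inverting the
randomized p-value at level ε has coverage
approximately 1 - ε. -/
theorem approx_general_validity_coverage
    {Ω : Type*} [MeasurableSpace Ω] (μ : Measure Ω) [IsProbabilityMeasure μ]
    {ι : Type*} [Fintype ι] (π₀ : ι) (d : ℕ) (hd : Fintype.card ι = d)
    (A Ao : ι → Ω → ℝ)
    (hA : ∀ π, Measurable (A π)) (hAo : ∀ π, Measurable (Ao π))
    (δ₁ δ₂ γ₁ γ₂ D : ℝ)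
    (hδ₁ : 0 ≤ δ₁) (hδ₂ : 0 ≤ δ₂) (hγ₁ : 0 ≤ γ₁) (hγ₂ : 0 ≤ γ₂) (hD : 0 ≤ D)
    -- the CDF of the oracle non-conformity score of the identity permutation
    (F : ℝ → ℝ) (hF : ∀ x, F x = (μ {ω | Ao π₀ ω < x}).toReal)
    -- the empirical CDF of the oracle scores over the permutations
    (Ftil : Ω → ℝ → ℝ)
    (hFtil : ∀ ω x, Ftil ω x =
      ((Finset.univ.filter fun π => Ao π ω < x).card : ℝ) / d)
    -- the randomized conformal p-value
    (phat : Ω → ℝ)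
    (hphat : ∀ ω, phat ω =
      ((Finset.univ.filter fun π => A π ω ≥ A π₀ ω).card : ℝ) / d)
    -- (1) approximate ergodicity
    (h1 : ENNReal.ofReal (1 - γ₁) ≤ μ {ω | ∀ x : ℝ, |Ftil ω x - F x| ≤ δ₁})
    -- (2) small estimation errors
    (h2 : ENNReal.ofReal (1 - γ₂) ≤
      μ {ω | (∑ π : ι, (A π ω - Ao π ω) ^ 2) / d ≤ δ₂ ^ 2 ∧
             |A π₀ ω - Ao π₀ ω| ≤ δ₂})
    -- (3) the law of the oracle score has a Lebesgue density bounded by D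
    (h3 : ∃ f : ℝ → ENNReal, μ.map (Ao π₀) = volume.withDensity f ∧
      ∀ᵐ x ∂(volume : Measure ℝ), f x ≤ ENNReal.ofReal D) :
    ∀ ε ∈ Set.Ioo (0 : ℝ) 1,
      |(μ {ω | ε < phat ω}).toReal - (1 - ε)| ≤
        6 * δ₁ + 4 * δ₂ + 2 * D * (δ₂ + 2 * Real.sqrt δ₂) + γ₁ + γ₂ :=
  approx_general_validity_coverage_general μ π₀ d hd A Ao hA hAo δ₁ δ₂ γ₁ γ₂ D hδ₁ hδ₂ hD F hF Ftil
    hFtil phat hphat h1 h2 h3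
end

section
/- Let (Ω, P) be a probability space, S a measurable space, Z : Ω → S a random element, and G a finite group of measurable bijections of S (containing the identity) such that for every g ∈ G the random element g ∘ Z has the same distribution as Z. Let A : S → ℝ be measurable and define the randomized p-value p̂(ω) = (1/|G|)·#{g ∈ G : A(g(Z(ω))) ≥ A(Z(ω))}. Then for every ε ∈ (0, 1), P(p̂ ≤ ε) ≤ ε. -/
open MeasureTheory Finset ENNReal

lemma comb_bound {G S : Type*} [Group G] [Fintype G] [MulAction G S]
    (A : S → ℝ) (s : S) (k : ℕ) :
    (univ.filter fun g : G =>
      (univ.filter fun h : G => A (h • g • s) ≥ A (g • s)).card ≤ k).card ≤ k := by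
  have key : ∀ (g : G) (t : ℝ),
      (univ.filter fun h : G => A (h • g • s) ≥ t).card
        = (univ.filter fun h : G => A (h • s) ≥ t).card := by
    intro g t
    classical
    have himg : (univ.filter fun h : G => A (h • g • s) ≥ t)
        = (univ.filter fun h : G => A (h • s) ≥ t).image (· * g⁻¹) := by
      ext h
      simp only [mem_image, mem_filter, mem_univ, true_and]
      constructor
      · intro hh
        exact ⟨h * g, by rw [mul_smul]; exact hh, by group⟩
      · rintro ⟨h', hh', rfl⟩
        rw [smul_smul, mul_assoc, inv_mul_cancel, mul_one]
        exact hh'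
    rw [himg, Finset.card_image_of_injective _ (mul_left_injective g⁻¹)]
  set T := univ.filter fun g : G =>
      (univ.filter fun h : G => A (h • g • s) ≥ A (g • s)).card ≤ k with hT
  rcases T.eq_empty_or_nonempty with h | h
  · simp [h]
  · obtain ⟨g₀, hg₀T, hmin⟩ := T.exists_min_image (fun g => A (g • s)) h
    have hsub : T ⊆ univ.filter fun h : G => A (h • s) ≥ A (g₀ • s) := by
      intro g hg
      simp only [mem_filter, mem_univ, true_and]
      exact hmin g hg
    have hg₀ : (univ.filter fun h : G => A (h • g₀ • s) ≥ A (g₀ • s)).card ≤ k := by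
      simpa [hT] using hg₀T
    calc T.card ≤ (univ.filter fun h : G => A (h • s) ≥ A (g₀ • s)).card :=
          Finset.card_le_card hsub
      _ = (univ.filter fun h : G => A (h • g₀ • s) ≥ A (g₀ • s)).card := (key g₀ _).symm
      _ ≤ k := hg₀

/-- Theorem 3 (General Exact Validity), first conclusion: if the distribution of `Z`
is invariant under a finite group `G` of measurable bijections (acting on the sample
space `S`), then the randomized conformal p-value is exactly valid. -/
theorem general_exact_validity_pvalue
    {Ω S : Type*} [MeasurableSpace Ω] [MeasurableSpace S]
    (μ : Measure Ω) [IsProbabilityMeasure μ]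
    {G : Type*} [Group G] [Fintype G] [MulAction G S]
    (hmeas : ∀ g : G, Measurable (fun s : S => g • s))
    (Z : Ω → S) (hZ : Measurable Z)
    (hinv : ∀ g : G, μ.map (fun ω => g • Z ω) = μ.map Z)
    (A : S → ℝ) (hA : Measurable A)
    (phat : Ω → ℝ)
    (hphat : ∀ ω, phat ω =
      ((Finset.univ.filter fun g : G => A (g • Z ω) ≥ A (Z ω)).card : ℝ) /
        (Fintype.card G)) :
    ∀ ε ∈ Set.Ioo (0 : ℝ) 1, μ {ω | phat ω ≤ ε} ≤ ENNReal.ofReal ε := by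
  intro ε hε
  obtain ⟨hε0, hε1⟩ := hε
  set n := Fintype.card G with hn
  have hn0 : 0 < n := Fintype.card_pos
  have hεn0 : (0:ℝ) ≤ ε * n := by positivity
  set k := ⌊ε * n⌋₊ with hk
  set f : S → ℕ := fun s => (univ.filter fun g : G => A (g • s) ≥ A s).card with hf
  have hfmeas : Measurable f := by
    have : f = fun s => ∑ g : G, if A (g • s) ≥ A s then 1 else 0 := by
      funext s; simp [hf, Finset.sum_boole]
    rw [this]
    exact Finset.measurable_sum _ fun g _ =>
      Measurable.ite (measurableSet_le hA (hA.comp (hmeas g))) measurable_const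
        measurable_const
  set E : Set S := {s | f s ≤ k} with hE
  have hEmeas : MeasurableSet E := hfmeas (measurableSet_le measurable_id measurable_const)
  have hset : {ω | phat ω ≤ ε} = Z ⁻¹' E := by
    ext ω
    simp only [Set.mem_setOf_eq, Set.mem_preimage, hE, Set.mem_setOf_eq, hphat ω]
    rw [div_le_iff₀ (by exact_mod_cast hn0), hk, ← Nat.le_floor_iff hεn0]
  rw [hset]
  -- each shifted preimage has same measure
  have hB : ∀ g : G, MeasurableSet ((fun ω => g • Z ω) ⁻¹' E) := fun g =>
    ((hmeas g).comp hZ) hEmeas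
  have hsame : ∀ g : G, μ ((fun ω => g • Z ω) ⁻¹' E) = μ (Z ⁻¹' E) := by
    intro g
    have h1 : μ.map (fun ω => g • Z ω) E = μ ((fun ω => g • Z ω) ⁻¹' E) :=
      Measure.map_apply ((hmeas g).comp hZ) hEmeas
    have h2 : μ.map Z E = μ (Z ⁻¹' E) := Measure.map_apply hZ hEmeas
    rw [← h1, hinv g, h2]
  -- key counting bound via lintegral
  have hkey : (n : ℝ≥0∞) * μ (Z ⁻¹' E) ≤ (k : ℝ≥0∞) := by
    have hsum : ∑ g : G, μ ((fun ω => g • Z ω) ⁻¹' E) = (n : ℝ≥0∞) * μ (Z ⁻¹' E) := by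
      simp [hsame, hn]
    rw [← hsum]
    have heq : ∀ g : G, μ ((fun ω => g • Z ω) ⁻¹' E)
        = ∫⁻ ω, ((fun ω => g • Z ω) ⁻¹' E).indicator (fun _ => (1:ℝ≥0∞)) ω ∂μ := by
      intro g
      rw [lintegral_indicator (hB g)]
      simp
    calc ∑ g : G, μ ((fun ω => g • Z ω) ⁻¹' E)
        = ∫⁻ ω, ∑ g : G, ((fun ω => g • Z ω) ⁻¹' E).indicator (fun _ => (1:ℝ≥0∞)) ω ∂μ := by
          rw [lintegral_finset_sum]
          · exact Finset.sum_congr rfl fun g _ => heq g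
          · exact fun g _ => (measurable_const.indicator (hB g))
      _ ≤ ∫⁻ _, (k : ℝ≥0∞) ∂μ := by
          apply lintegral_mono
          intro ω
          dsimp only
          have : ∑ g : G, ((fun ω => g • Z ω) ⁻¹' E).indicator (fun _ => (1:ℝ≥0∞)) ω
              = ((univ.filter fun g : G => g • Z ω ∈ E).card : ℝ≥0∞) := by
            rw [← Finset.sum_boole]
            exact Finset.sum_congr rfl fun g _ => by
              by_cases h : g • Z ω ∈ E <;> simp [Set.indicator_apply, h]
          rw [this]
          have hEq : (univ.filter fun g : G => g • Z ω ∈ E)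
              = (univ.filter fun g : G =>
                  (univ.filter fun h : G => A (h • g • Z ω) ≥ A (g • Z ω)).card ≤ k) := by
            apply Finset.filter_congr
            intro g _
            simp [hE, hf, Set.mem_setOf_eq]
          have h2 : (univ.filter fun g : G => g • Z ω ∈ E).card ≤ k := by
            rw [hEq]; exact comb_bound (G := G) A (Z ω) k
          exact_mod_cast h2
      _ = (k : ℝ≥0∞) := by simp
  -- conclude
  have hkε : (k : ℝ≥0∞) ≤ ENNReal.ofReal ε * n := by
    have h1 : (k : ℝ) ≤ ε * n := Nat.floor_le hεn0
    have : (k : ℝ≥0∞) = ENNReal.ofReal (k : ℝ) := by simp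
    rw [this, ← ENNReal.ofReal_natCast n,
      ← ENNReal.ofReal_mul hε0.le]
    exact ENNReal.ofReal_le_ofReal h1
  have hfin : μ (Z ⁻¹' E) * n ≤ ENNReal.ofReal ε * n := by
    rw [mul_comm]
    exact le_trans hkey hkε
  have hn' : (n : ℝ≥0∞) ≠ 0 := by exact_mod_cast hn0.ne'
  exact (ENNReal.mul_le_mul_iff_left hn' (ENNReal.natCast_ne_top n)).mp hfin
end

section
/- Let (Ω, P) be a probability space, S a measurable space, Z : Ω → S a random element, and G a finite group of measurable bijections of S of size d (containing the identity) such that for every g ∈ G the random element g ∘ Z has the same distribution as Z. Let A : S → ℝ be measurable. Fix ε ∈ (0, 1), set r(ε) = ⌈(d + 1)ε⌉, and assume r(ε) ≤ d and (r(ε) − 1)/d ≤ ε. Let Q(ω) denote the r(ε)-th largest value (counting multiplicity) of the finite family {A(g(Z(ω))) : g ∈ G}. Then P(A(Z) > Q) ≤ ε; equivalently, the prediction region {A ≤ Q} contains the truth with probability at least 1 − ε. -/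
/-!
Let `E` be the event that the score `A s` exceeds the `r`-th largest score over the orbit
of `s`. That quantile is constant on orbits, so for every `s` fewer than `r` elements `g` of
`G` satisfy `g • s ∈ E`. Since the law of `Z` is `G`-invariant, each of the `d` events
`g • Z ∈ E` has the probability of `Z ∈ E`; summing over `G` gives
`d · P(Z ∈ E) ≤ r - 1 ≤ d ε`.
-/

open MeasureTheory Finset
open scoped ENNReal

/-- The `k`-th largest value (counting multiplicity) of a finite family of reals,
with default value `0` when `k` is out of range. -/
noncomputable def kthLargest {ι : Type*} [Fintype ι] (f : ι → ℝ) (k : ℕ) : ℝ :=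
  ((Finset.univ.val.map f).sort (· ≤ ·)).getD (Fintype.card ι - k) 0

theorem List.Pairwise.getElem_le_iff_countP_lt {α : Type*} [LinearOrder α] {l : List α}
    (hl : l.Pairwise (· ≤ ·)) {j : ℕ} (hj : j < l.length) (c : α) :
    l[j] ≤ c ↔ l.countP (c < ·) < l.length - j := by
  have hsplit := List.take_append_drop j l
  have hdrop : l.drop j = l[j] :: l.drop (j + 1) := List.drop_eq_getElem_cons hj
  obtain ⟨-, hD, hTD⟩ := List.pairwise_append.mp (hsplit ▸ hl)
  have hT : ∀ a ∈ l.take j, a ≤ l[j] := fun a ha => hTD a ha _ (hdrop ▸ List.mem_cons_self)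
  have hD : ∀ b ∈ l.drop j, l[j] ≤ b := by
    rw [hdrop] at hD ⊢
    exact List.forall_mem_cons.mpr ⟨le_rfl, fun _ => List.rel_of_pairwise_cons hD⟩
  have hcount : l.countP (c < ·) = (l.take j).countP (c < ·) + (l.drop j).countP (c < ·) := by
    rw [← List.countP_append, hsplit]
  have hlen : (l.drop j).length = l.length - j := List.length_drop
  constructor
  · intro h
    have hT0 : (l.take j).countP (c < ·) = 0 :=
      List.countP_eq_zero.mpr fun a ha => by simpa using (hT a ha).trans h
    have hDlt : (l.drop j).countP (c < ·) < (l.drop j).length := by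
      rw [List.countP_eq_length_filter, List.length_filter_lt_length_iff_exists]
      exact ⟨l[j], hdrop ▸ List.mem_cons_self, by simpa using h⟩
    omega
  · intro h
    by_contra! hc
    have hDall : (l.drop j).countP (c < ·) = (l.drop j).length :=
      List.countP_eq_length.mpr fun b hb => by simpa using hc.trans_le (hD b hb)
    omega

theorem kthLargest_le_iff {ι : Type*} [Fintype ι] (f : ι → ℝ) {k : ℕ}
    (hk₀ : 1 ≤ k) (hk : k ≤ Fintype.card ι) (c : ℝ) :
    kthLargest f k ≤ c ↔ #{i | c < f i} < k := by
  set l := (Finset.univ.val.map f).sort (· ≤ ·) with hl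
  have hlen : l.length = Fintype.card ι := by simp [l]
  have hj : Fintype.card ι - k < l.length := by omega
  have hcount : #{i | c < f i} = l.countP (c < ·) := by
    rw [← Multiset.coe_countP, hl, Multiset.sort_eq, Multiset.countP_map]
    rfl
  rw [kthLargest, ← hl, List.getD_eq_getElem _ _ hj,
    (Multiset.pairwise_sort _ _).getElem_le_iff_countP_lt hj, hcount, hlen, Nat.sub_sub_self hk]

theorem kthLargest_comp_equiv {ι κ : Type*} [Fintype ι] [Fintype κ] (f : ι → ℝ) (e : κ ≃ ι)
    (k : ℕ) : kthLargest (f ∘ e) k = kthLargest f k := by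
  rw [kthLargest, kthLargest, Fintype.card_congr e, ← Multiset.map_map, Multiset.map_univ_val_equiv]

theorem measurable_kthLargest {α ι : Type*} [MeasurableSpace α] [Fintype ι]
    {f : ι → α → ℝ} (hf : ∀ i, Measurable (f i)) {k : ℕ}
    (hk₀ : 1 ≤ k) (hk : k ≤ Fintype.card ι) :
    Measurable fun a => kthLargest (fun i => f i a) k := by
  refine measurable_of_Iic fun c => ?_
  have hcount : Measurable fun a => #{i | c < f i a} := by
    simp_rw [Finset.card_filter]
    exact Finset.measurable_sum _ fun i _ =>
      Measurable.ite (measurableSet_lt measurable_const (hf i)) measurable_const measurable_const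
  have hpre : (fun a => kthLargest (fun i => f i a) k) ⁻¹' Set.Iic c
      = (fun a => #{i | c < f i a}) ⁻¹' Set.Iio k := by
    ext a
    exact kthLargest_le_iff (fun i => f i a) hk₀ hk c
  rw [hpre]
  exact hcount (Set.to_countable _).measurableSet

theorem smulInvariantMeasure_map_of_map_smul_eq {Ω G S : Type*} [MeasurableSpace Ω]
    [MeasurableSpace S] [SMul G S] [MeasurableConstSMul G S] {μ : Measure Ω} {Z : Ω → S}
    (hZ : Measurable Z) (hinv : ∀ g : G, μ.map (fun ω => g • Z ω) = μ.map Z) :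
    SMulInvariantMeasure G S (μ.map Z) where
  measure_preimage_smul g E hE := by
    rw [← Measure.map_apply (measurable_const_smul g) hE,
      Measure.map_map (measurable_const_smul g) hZ]
    exact congrArg (· E) (hinv g)

theorem card_mul_measure_le_of_card_smul_mem_le {G S : Type*} [SMul G S] [Fintype G]
    [MeasurableSpace S] [MeasurableConstSMul G S] (ν : Measure S) [SMulInvariantMeasure G S ν]
    {E : Set S} [DecidablePred (· ∈ E)] (hE : MeasurableSet E) {m : ℕ}
    (hm : ∀ s, #{g : G | g • s ∈ E} ≤ m) :
    Fintype.card G * ν E ≤ m * ν Set.univ := by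
  have hpre (g : G) : MeasurableSet ((g • ·) ⁻¹' E) := hE.preimage (measurable_const_smul g)
  calc (Fintype.card G : ℝ≥0∞) * ν E = ∑ g : G, ν ((g • ·) ⁻¹' E) := by
        simp [SMulInvariantMeasure.measure_preimage_smul _ hE, Finset.card_univ]
    _ = ∫⁻ s, ∑ g : G, ((g • ·) ⁻¹' E).indicator 1 s ∂ν := by
        rw [lintegral_finsetSum _ fun g _ => measurable_one.indicator (hpre g)]
        simp only [lintegral_indicator_one (hpre _)]
    _ = ∫⁻ s, (#{g : G | g • s ∈ E} : ℝ≥0∞) ∂ν := by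
        refine lintegral_congr fun s => ?_
        rw [Finset.card_filter, Nat.cast_sum]
        exact Finset.sum_congr rfl fun g _ => by by_cases h : g • s ∈ E <;> simp [h]
    _ ≤ ∫⁻ _, (m : ℝ≥0∞) ∂ν := lintegral_mono fun s => Nat.cast_le.mpr (hm s)
    _ = m * ν Set.univ := lintegral_const _

theorem ENNReal.le_ofReal_of_natCast_mul_le {p : ℝ≥0∞} {d m : ℕ} {ε : ℝ} (hd : 0 < d)
    (hp : d * p ≤ m) (hm : (m : ℝ) / d ≤ ε) : p ≤ ENNReal.ofReal ε := by
  have hd' : (0 : ℝ) < d := Nat.cast_pos.mpr hd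
  rw [← ENNReal.mul_le_mul_iff_right (Nat.cast_ne_zero.mpr hd.ne') (ENNReal.natCast_ne_top d)]
  refine hp.trans ?_
  rw [← ENNReal.ofReal_natCast d, ← ENNReal.ofReal_mul hd'.le, ← ENNReal.ofReal_natCast]
  exact ENNReal.ofReal_le_ofReal ((div_le_iff₀' hd').mp hm)

theorem ofReal_one_sub_le_prob_compl {Ω : Type*} [MeasurableSpace Ω] {μ : Measure Ω}
    [IsProbabilityMeasure μ] {s : Set Ω} {ε : ℝ} (hε : 0 ≤ ε) (hs : μ s ≤ ENNReal.ofReal ε) :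
    ENNReal.ofReal (1 - ε) ≤ μ sᶜ := by
  rw [ENNReal.ofReal_sub _ hε, ENNReal.ofReal_one, tsub_le_iff_left, ← measure_univ (μ := μ)]
  exact (measure_univ_le_add_compl s).trans (add_le_add_left hs _)

section OrbitKthLargest

variable {G S : Type*} [Group G] [Fintype G] [MulAction G S]

variable (G) in
noncomputable def orbitKthLargest (A : S → ℝ) (r : ℕ) (s : S) : ℝ :=
  kthLargest (fun g : G => A (g • s)) r

theorem orbitKthLargest_smul (A : S → ℝ) (r : ℕ) (g : G) (s : S) :
    orbitKthLargest G A r (g • s) = orbitKthLargest G A r s := by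
  simp only [orbitKthLargest, ← mul_smul]
  exact kthLargest_comp_equiv (fun h : G => A (h • s)) (Equiv.mulRight g) r

theorem measurable_orbitKthLargest [MeasurableSpace S] [MeasurableConstSMul G S] {A : S → ℝ}
    (hA : Measurable A) {r : ℕ} (hr₀ : 1 ≤ r) (hr : r ≤ Fintype.card G) :
    Measurable (orbitKthLargest G A r) :=
  measurable_kthLargest (fun g => hA.comp (measurable_const_smul g)) hr₀ hr

theorem card_orbitKthLargest_smul_lt_lt (A : S → ℝ) {r : ℕ} (hr₀ : 1 ≤ r)
    (hr : r ≤ Fintype.card G) (s : S) :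
    #{g : G | orbitKthLargest G A r (g • s) < A (g • s)} < r := by
  simp only [orbitKthLargest_smul]
  exact (kthLargest_le_iff _ hr₀ hr _).mp le_rfl

end OrbitKthLargest

/-- Theorem 3 (General Exact Validity), second conclusion: inverting the
`⌈(d+1)ε⌉`-th largest non-conformity score over the orbit of a distribution-invariant
finite group of transformations yields a prediction region with exact finite-sample
coverage at least `1 - ε`. -/
theorem general_exact_validity_coverage
    {Ω S : Type*} [MeasurableSpace Ω] [MeasurableSpace S]
    (μ : Measure Ω) [IsProbabilityMeasure μ]
    {G : Type*} [Group G] [Fintype G] [MulAction G S]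
    (d : ℕ) (hd : Fintype.card G = d)
    (hmeas : ∀ g : G, Measurable (fun s : S => g • s))
    (Z : Ω → S) (hZ : Measurable Z)
    (hinv : ∀ g : G, μ.map (fun ω => g • Z ω) = μ.map Z)
    (A : S → ℝ) (hA : Measurable A)
    (ε : ℝ) (hε : ε ∈ Set.Ioo (0 : ℝ) 1)
    (r : ℕ) (hr : r = ⌈((d : ℝ) + 1) * ε⌉₊)
    (hrd : r ≤ d) (hrε : ((r : ℝ) - 1) / d ≤ ε)
    -- `Q ω` is the `r`-th largest value of the family `g ↦ A (g • Z ω)`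
    (Q : Ω → ℝ) (hQ : ∀ ω, Q ω = kthLargest (fun g : G => A (g • Z ω)) r) :
    μ {ω | Q ω < A (Z ω)} ≤ ENNReal.ofReal ε ∧
      ENNReal.ofReal (1 - ε) ≤ μ {ω | A (Z ω) ≤ Q ω} := by
  have hr₀ : 1 ≤ r := hr ▸ Nat.one_le_ceil_iff.mpr (mul_pos (by positivity) hε.1)
  have : MeasurableConstSMul G S := ⟨hmeas⟩
  have : SMulInvariantMeasure G S (μ.map Z) := smulInvariantMeasure_map_of_map_smul_eq hZ hinv
  have hrG : r ≤ Fintype.card G := hd ▸ hrd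
  set E := {s | orbitKthLargest G A r s < A s}
  have hE : MeasurableSet E := measurableSet_lt (measurable_orbitKthLargest hA hr₀ hrG) hA
  have hevent : {ω | Q ω < A (Z ω)} = Z ⁻¹' E := by
    ext ω
    simp [E, hQ, orbitKthLargest]
  have hcount := card_mul_measure_le_of_card_smul_mem_le (μ.map Z) hE (m := r - 1)
    fun s => Nat.le_sub_one_of_lt (card_orbitKthLargest_smul_lt_lt A hr₀ hrG s)
  rw [Measure.map_apply hZ hE, ← hevent, Measure.map_apply hZ MeasurableSet.univ,
    Set.preimage_univ, measure_univ, mul_one, hd] at hcount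
  have hmiscover : μ {ω | Q ω < A (Z ω)} ≤ ENNReal.ofReal ε :=
    ENNReal.le_ofReal_of_natCast_mul_le (hr₀.trans hrd) hcount
      (by rwa [Nat.cast_sub hr₀, Nat.cast_one])
  refine ⟨hmiscover, ?_⟩
  have hcover : {ω | A (Z ω) ≤ Q ω} = {ω | Q ω < A (Z ω)}ᶜ := by
    ext ω
    simp
  exact hcover ▸ ofReal_one_sub_le_prob_compl hε.1.le hmiscover
end

section
/- Let Π be a finite index set of size d with distinguished element π₀, let a, b : Π → ℝ, and define the empirical CDFs F̂(x) = (1/d)·#{π ∈ Π : a_π < x} and F̃(x) = (1/d)·#{π ∈ Π : b_π < x}. Let F : ℝ → ℝ be Lipschitz with constant D ≥ 0, let δ₁ ≥ 0 and δ₂ > 0, and assume: sup_{x ∈ ℝ} |F̃(x) − F(x)| ≤ δ₁, (1/d)·Σ_{π ∈ Π} (a_π − b_π)² ≤ δ₂², and |a_{π₀} − b_{π₀}| ≤ δ₂. Then |F̂(a_{π₀}) − F(b_{π₀})| ≤ 3δ₁ + δ₂ + D·(δ₂ + 2√δ₂). -/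
open Finset

/-- Inequality (14), the conclusion of Step 1 of the proof of Theorem 1: under the
ergodicity and small-estimation-error conditions, the approximate randomized p-value
`F̂(a_{π₀})` is within `3δ₁ + δ₂ + D(δ₂ + 2√δ₂)` of the oracle p-value `F(b_{π₀})`. -/
theorem pvalue_oracle_bound
    {ι : Type*} [Fintype ι] (d : ℕ) (hd : Fintype.card ι = d) (π₀ : ι)
    (a b : ι → ℝ)
    (Fhat Ftil : ℝ → ℝ)
    (hFhat : ∀ x, Fhat x = ((Finset.univ.filter fun π : ι => a π < x).card : ℝ) / d)
    (hFtil : ∀ x, Ftil x = ((Finset.univ.filter fun π : ι => b π < x).card : ℝ) / d)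
    (F : ℝ → ℝ) (D : ℝ) (hD : 0 ≤ D)
    (hF : ∀ x y : ℝ, |F x - F y| ≤ D * |x - y|)
    (δ₁ δ₂ : ℝ) (hδ₁ : 0 ≤ δ₁) (hδ₂ : 0 < δ₂)
    (h1 : ∀ x : ℝ, |Ftil x - F x| ≤ δ₁)
    (h2 : (∑ π : ι, (a π - b π) ^ 2) / d ≤ δ₂ ^ 2)
    (h3 : |a π₀ - b π₀| ≤ δ₂) :
    |Fhat (a π₀) - F (b π₀)| ≤
      3 * δ₁ + δ₂ + D * (δ₂ + 2 * Real.sqrt δ₂) := by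

  classical
  have hne : Nonempty ι := ⟨π₀⟩
  have hd0 : 0 < d := hd ▸ Fintype.card_pos
  have hdR : (0:ℝ) < d := by exact_mod_cast hd0
  set ε := Real.sqrt δ₂ with hεdef
  have hε : 0 < ε := Real.sqrt_pos.mpr hδ₂
  have hε2 : ε ^ 2 = δ₂ := Real.sq_sqrt hδ₂.le
  set B := Finset.univ.filter (fun π : ι => ε ≤ |a π - b π|) with hBdef
  have hBcard : (B.card : ℝ) / d ≤ δ₂ := by
    have hsum : δ₂ * B.card ≤ ∑ π : ι, (a π - b π) ^ 2 := by
      calc δ₂ * B.card = ∑ _π ∈ B, δ₂ := by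
            rw [Finset.sum_const, nsmul_eq_mul]; ring
        _ ≤ ∑ π ∈ B, (a π - b π) ^ 2 := by
            refine Finset.sum_le_sum fun π hπ => ?_
            have h := (Finset.mem_filter.mp hπ).2
            have : ε ^ 2 ≤ |a π - b π| ^ 2 := by nlinarith [abs_nonneg (a π - b π)]
            rw [sq_abs] at this
            linarith [hε2]
        _ ≤ ∑ π : ι, (a π - b π) ^ 2 :=
            Finset.sum_le_sum_of_subset_of_nonneg (Finset.filter_subset _ _)
              (fun i _ _ => sq_nonneg _)
    have hS : (∑ π : ι, (a π - b π) ^ 2) ≤ δ₂ ^ 2 * d := by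
      rw [div_le_iff₀ hdR] at h2; linarith
    rw [div_le_iff₀ hdR]
    nlinarith
  -- upper bound
  have sub1 : (Finset.univ.filter fun π : ι => a π < a π₀) ⊆
      (Finset.univ.filter fun π : ι => b π < a π₀ + ε) ∪ B := by
    intro π hπ
    have hπ' := (Finset.mem_filter.mp hπ).2
    by_cases hb : ε ≤ |a π - b π|
    · exact Finset.mem_union_right _ (Finset.mem_filter.mpr ⟨Finset.mem_univ _, hb⟩)
    · push_neg at hb
      refine Finset.mem_union_left _ (Finset.mem_filter.mpr ⟨Finset.mem_univ _, ?_⟩)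
      have := abs_lt.mp hb
      linarith [this.1, this.2]
  have sub2 : (Finset.univ.filter fun π : ι => b π < a π₀ - ε) ⊆
      (Finset.univ.filter fun π : ι => a π < a π₀) ∪ B := by
    intro π hπ
    have hπ' := (Finset.mem_filter.mp hπ).2
    by_cases hb : ε ≤ |a π - b π|
    · exact Finset.mem_union_right _ (Finset.mem_filter.mpr ⟨Finset.mem_univ _, hb⟩)
    · push_neg at hb
      refine Finset.mem_union_left _ (Finset.mem_filter.mpr ⟨Finset.mem_univ _, ?_⟩)
      have := abs_lt.mp hb
      linarith [this.1, this.2]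
  have key1 : Fhat (a π₀) ≤ Ftil (a π₀ + ε) + δ₂ := by
    rw [hFhat, hFtil]
    have hc : ((Finset.univ.filter fun π : ι => a π < a π₀).card : ℝ) ≤
        ((Finset.univ.filter fun π : ι => b π < a π₀ + ε).card : ℝ) + B.card := by
      have := (Finset.card_le_card sub1).trans (Finset.card_union_le _ _)
      exact_mod_cast this
    have : ((Finset.univ.filter fun π : ι => a π < a π₀).card : ℝ) / d ≤
        ((Finset.univ.filter fun π : ι => b π < a π₀ + ε).card : ℝ) / d + (B.card : ℝ) / d := by
      rw [← add_div]; exact div_le_div_of_nonneg_right hc hdR.le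
    linarith [hBcard]
  have key2 : Ftil (a π₀ - ε) ≤ Fhat (a π₀) + δ₂ := by
    rw [hFhat, hFtil]
    have hc : ((Finset.univ.filter fun π : ι => b π < a π₀ - ε).card : ℝ) ≤
        ((Finset.univ.filter fun π : ι => a π < a π₀).card : ℝ) + B.card := by
      have := (Finset.card_le_card sub2).trans (Finset.card_union_le _ _)
      exact_mod_cast this
    have : ((Finset.univ.filter fun π : ι => b π < a π₀ - ε).card : ℝ) / d ≤
        ((Finset.univ.filter fun π : ι => a π < a π₀).card : ℝ) / d + (B.card : ℝ) / d := by
      rw [← add_div]; exact div_le_div_of_nonneg_right hc hdR.le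
    linarith [hBcard]
  -- relate to F
  have hF1 := abs_le.mp (h1 (a π₀ + ε))
  have hF2 := abs_le.mp (h1 (a π₀ - ε))
  have hL1 := abs_le.mp (hF (a π₀ + ε) (b π₀))
  have hL2 := abs_le.mp (hF (a π₀ - ε) (b π₀))
  have habs1 : |a π₀ + ε - b π₀| ≤ δ₂ + ε := by
    have := abs_le.mp h3
    rw [abs_le]; constructor <;> linarith [this.1, this.2]
  have habs2 : |a π₀ - ε - b π₀| ≤ δ₂ + ε := by
    have := abs_le.mp h3
    rw [abs_le]; constructor <;> linarith [this.1, this.2]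
  have hDε1 : D * |a π₀ + ε - b π₀| ≤ D * (δ₂ + ε) := mul_le_mul_of_nonneg_left habs1 hD
  have hDε2 : D * |a π₀ - ε - b π₀| ≤ D * (δ₂ + ε) := mul_le_mul_of_nonneg_left habs2 hD
  have hDε : 0 ≤ D * ε := mul_nonneg hD hε.le
  rw [abs_le]
  constructor
  · nlinarith [hF2.1, hL2.1, hL2.2, key2]
  · nlinarith [hF1.2, hL1.1, hL1.2, key1]
end
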